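/- arXiv:2504.21413 — 2 statements merged into one kernel-verified Lean document; each statement's English description precedes it below -/
import Mathlib

section
/- Let λ ∈ (0,1)^d be distinct and α ∈ ℝ_{>0}^d with Σ_{i=1}^d α_i < 1 and Σ_{i=1}^d α_i/λ_i < 1. Then the parameters (α̂, λ̂) satisfying BLT_n(α, λ)^{-1} = BLT_n(α̂, λ̂) for all n, with λ̂ sorted decreasingly, satisfy the strict interlacing λ_1 > λ̂_1 > λ_2 > λ̂_2 > ⋯ > λ_{d-1} > λ̂_{d-1} > λ_d > λ̂_d, where λ is also sorted decreasingly. -/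
/-!
Write `P(x) = ∏ (1 - λᵢ x)` (`bltDenom`) and `r(x) = P(x) + x ∑ αᵢ ∏_{j ≠ i} (1 - λⱼ x)`
(`bltNumer`), so that the generating function of the first column of `BLT(α, λ)` is `r / P`,
and that of its inverse is `P / r`. Comparing with `r̂ / P̂` for the inverse BLT gives the
polynomial identity `P P̂ = r r̂`.

The signs of `r` at the poles `μᵢ = 1/λᵢ` alternate, and `∑ αᵢ / λᵢ < 1` gives `r` the sign
`(-1)^d` beyond `μ_d`; by the intermediate value theorem `r` has roots `νᵢ ∈ (μᵢ, μᵢ₊₁)`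
(with `μ_{d+1} = ∞`). Since `P(νᵢ) ≠ 0`, each `νᵢ` is a root of `P̂`, i.e. `1/νᵢ` is one of
the `λ̂ₖ`; as there are `d` of each and both are sorted, `λ̂ᵢ = 1/νᵢ`.
-/

open Finset

/-- The `n × n` lower-triangular Toeplitz matrix whose first column is
`a 0, a 1, a 2, …`. -/
def ltToeplitz (n : ℕ) (a : ℕ → ℝ) : Matrix (Fin n) (Fin n) ℝ :=
  Matrix.of fun j k => if (k : ℕ) ≤ (j : ℕ) then a ((j : ℕ) - (k : ℕ)) else 0

/-- First column of the BLT matrix: `1, ∑ αᵢ, ∑ αᵢλᵢ, ∑ αᵢλᵢ², …` -/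
def bltCoef (d : ℕ) (α lam : Fin d → ℝ) : ℕ → ℝ :=
  fun t => if t = 0 then 1 else ∑ i, α i * lam i ^ (t - 1)

lemma det_ltToeplitz (n : ℕ) (a : ℕ → ℝ) : (ltToeplitz n a).det = a 0 ^ n := by
  have hlow : (ltToeplitz n a).IsLowerTriangular := fun j k hjk => if_neg (not_le.mpr hjk)
  rw [Matrix.det_of_isLowerTriangular _ hlow]
  simp [ltToeplitz]

lemma ltToeplitz_mul_apply_last_zero (t : ℕ) (a b : ℕ → ℝ) :
    (ltToeplitz (t + 1) a * ltToeplitz (t + 1) b) (Fin.last t) 0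
      = PowerSeries.coeff t (PowerSeries.mk a * PowerSeries.mk b) := by
  rw [Matrix.mul_apply, mul_comm (PowerSeries.mk a), PowerSeries.coeff_mul,
    Finset.Nat.sum_antidiagonal_eq_sum_range_succ_mk, ← Fin.sum_univ_eq_sum_range]
  refine Finset.sum_congr rfl fun k _ => ?_
  simp [ltToeplitz, Fin.le_last, mul_comm]

lemma mk_mul_mk_eq_one_of_ltToeplitz_inv {a b : ℕ → ℝ} (ha : a 0 ≠ 0)
    (hinv : ∀ n : ℕ, 0 < n → (ltToeplitz n a)⁻¹ = ltToeplitz n b) :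
    PowerSeries.mk a * PowerSeries.mk b = 1 := by
  ext t
  have hunit : IsUnit (ltToeplitz (t + 1) a).det := by
    rw [det_ltToeplitz]; exact (pow_ne_zero _ ha).isUnit
  have hmul := Matrix.mul_nonsing_inv _ hunit
  rw [hinv _ t.succ_pos] at hmul
  rw [← ltToeplitz_mul_apply_last_zero, hmul, Matrix.one_apply, PowerSeries.coeff_one]
  simp [Fin.ext_iff]

lemma neg_one_pow_card_filter_neg_mul_prod_pos {ι R : Type*} [CommRing R] [LinearOrder R]
    [IsStrictOrderedRing R] (s : Finset ι) {f : ι → R} (hf : ∀ j ∈ s, f j ≠ 0) :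
    0 < (-1) ^ #(s.filter (f · < 0)) * ∏ j ∈ s, f j := by
  rw [← Finset.prod_filter_mul_prod_filter_not s (f · < 0), ← mul_assoc, ← Finset.prod_neg]
  refine mul_pos (Finset.prod_pos fun j hj => ?_) (Finset.prod_pos fun j hj => ?_)
  · exact neg_pos.mpr (Finset.mem_filter.mp hj).2
  · obtain ⟨hjs, hj⟩ := Finset.mem_filter.mp hj
    exact lt_of_le_of_ne (not_lt.mp hj) (hf j hjs).symm

lemma Fin.strictMono_snoc {α : Type*} [Preorder α] {n : ℕ} {f : Fin n → α} (hf : StrictMono f)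
    {a : α} (ha : ∀ i, f i < a) : StrictMono (Fin.snoc (α := fun _ => α) f a) := by
  intro i j hij
  induction j using Fin.lastCases with
  | last =>
    obtain ⟨i, rfl⟩ := Fin.exists_castSucc_eq.mpr hij.ne
    simpa using ha i
  | cast j =>
    obtain ⟨i, rfl⟩ := Fin.exists_castSucc_eq.mpr (hij.trans (Fin.castSucc_lt_last j)).ne
    simpa using hf (Fin.castSucc_lt_castSucc_iff.mp hij)

section Interlacing

variable {α : Type*} [Preorder α] {n : ℕ} {x : Fin (n + 1) → α}

lemma strictMono_of_mem_Ioo_castSucc_succ (hx : Monotone x) {ν : Fin n → α}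
    (hν : ∀ i, ν i ∈ Set.Ioo (x i.castSucc) (x i.succ)) : StrictMono ν := fun i j hij =>
  ((hν i).2.trans_le (hx (Fin.succ_le_castSucc_iff.mpr hij))).trans (hν j).1

lemma notMem_range_of_mem_Ioo_castSucc_succ (hx : StrictMono x) {i : Fin n} {y : α}
    (hy : y ∈ Set.Ioo (x i.castSucc) (x i.succ)) : y ∉ Set.range x := by
  rintro ⟨k, rfl⟩
  exact (hx.lt_iff_lt.mp hy.2).not_ge (Fin.castSucc_lt_iff_succ_le.mp (hx.lt_iff_lt.mp hy.1))

end Interlacing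

lemma exists_zeros_of_alternating_sign {f : ℝ → ℝ} (hf : Continuous f) {n : ℕ}
    {x : Fin (n + 1) → ℝ} (hx : StrictMono x)
    (hsign : ∀ k : Fin (n + 1), 0 < (-1) ^ (k : ℕ) * f (x k)) :
    ∃ ν : Fin n → ℝ, ∀ i, ν i ∈ Set.Ioo (x i.castSucc) (x i.succ) ∧ f (ν i) = 0 := by
  have hzero (i : Fin n) : ∃ y ∈ Set.Ioo (x i.castSucc) (x i.succ), f y = 0 := by
    have hleft := hsign i.castSucc
    have hright := hsign i.succ
    rw [Fin.val_castSucc] at hleft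
    rw [Fin.val_succ, pow_succ] at hright
    obtain ⟨y, hy, hfy⟩ := intermediate_value_Ioo' (hx i.castSucc_lt_succ).le
      (continuous_const.mul hf).continuousOn (by constructor <;> linarith : (0 : ℝ) ∈ Set.Ioo
        ((-1) ^ (i : ℕ) * f (x i.succ)) ((-1) ^ (i : ℕ) * f (x i.castSucc)))
    exact ⟨y, hy, (mul_eq_zero.mp hfy).resolve_left (pow_ne_zero _ (by norm_num))⟩
  choose ν hν using hzero
  exact ⟨ν, hν⟩

lemma StrictAnti.eq_of_forall_mem_range {ι α : Type*} [LinearOrder ι] [Finite ι] [Preorder α]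
    {f g : ι → α} (hf : StrictAnti f) (hg : StrictAnti g) (h : ∀ i, f i ∈ Set.range g) :
    f = g := by
  refine (hf.range_inj hg).mp
    (Set.eq_of_subset_of_ncard_le (Set.range_subset_iff.mpr h) ?_ (Set.finite_range g))
  rw [Set.ncard_range_of_injective hf.injective, Set.ncard_range_of_injective hg.injective]

lemma PowerSeries.one_sub_C_mul_X_mul_mk_pow {R : Type*} [CommRing R] (a : R) :
    (1 - PowerSeries.C a * PowerSeries.X) * PowerSeries.mk (fun n => a ^ n) = 1 := by
  ext (_ | n) <;> simp [sub_mul, mul_assoc, PowerSeries.coeff_succ_X_mul, pow_succ']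

open Polynomial

noncomputable def bltDenom (d : ℕ) (lam : Fin d → ℝ) : ℝ[X] :=
  ∏ i, (1 - C (lam i) * X)

noncomputable def bltNumer (d : ℕ) (α lam : Fin d → ℝ) : ℝ[X] :=
  bltDenom d lam + X * ∑ i, C (α i) * ∏ j ∈ univ.erase i, (1 - C (lam j) * X)

lemma mk_bltCoef (d : ℕ) (α lam : Fin d → ℝ) :
    PowerSeries.mk (bltCoef d α lam) = 1 + PowerSeries.X *
      ∑ i, PowerSeries.C (α i) * PowerSeries.mk (fun n => lam i ^ n) := by
  ext (_ | n) <;> simp [bltCoef, PowerSeries.coeff_succ_X_mul, map_sum]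

lemma coe_bltDenom_mul_mk_bltCoef (d : ℕ) (α lam : Fin d → ℝ) :
    (bltDenom d lam : PowerSeries ℝ) * PowerSeries.mk (bltCoef d α lam) = bltNumer d α lam := by
  have hfac (i : Fin d) : ((1 - C (lam i) * X : ℝ[X]) : PowerSeries ℝ)
      = 1 - PowerSeries.C (lam i) * PowerSeries.X := by simp
  simp only [bltNumer, bltDenom, mk_bltCoef, ← coeToPowerSeries.ringHom_apply, map_add, map_mul,
    map_sum, map_prod]
  simp only [coeToPowerSeries.ringHom_apply, hfac, coe_C, coe_X, mul_add, mul_one, Finset.mul_sum]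
  congr 1
  refine Finset.sum_congr rfl fun i _ => ?_
  rw [← Finset.mul_prod_erase _ _ (mem_univ i)]
  linear_combination (PowerSeries.X * PowerSeries.C (α i) *
    ∏ j ∈ univ.erase i, (1 - PowerSeries.C (lam j) * PowerSeries.X)) *
    PowerSeries.one_sub_C_mul_X_mul_mk_pow (lam i)

lemma bltDenom_mul_bltDenom_eq_bltNumer_mul_bltNumer {d : ℕ} {α lam αh lamh : Fin d → ℝ}
    (hinv : PowerSeries.mk (bltCoef d α lam) * PowerSeries.mk (bltCoef d αh lamh) = 1) :
    bltDenom d lam * bltDenom d lamh = bltNumer d α lam * bltNumer d αh lamh := by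
  apply Polynomial.coe_injective
  rw [Polynomial.coe_mul, Polynomial.coe_mul, ← coe_bltDenom_mul_mk_bltCoef,
    ← coe_bltDenom_mul_mk_bltCoef]
  linear_combination (-(bltDenom d lam : PowerSeries ℝ) * bltDenom d lamh) * hinv

lemma eval_bltDenom (d : ℕ) (lam : Fin d → ℝ) (x : ℝ) :
    (bltDenom d lam).eval x = ∏ i, (1 - lam i * x) := by
  simp [bltDenom, eval_prod]

lemma eval_bltNumer (d : ℕ) (α lam : Fin d → ℝ) (x : ℝ) :
    (bltNumer d α lam).eval x
      = ∏ i, (1 - lam i * x) + x * ∑ i, α i * ∏ j ∈ univ.erase i, (1 - lam j * x) := by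
  simp [bltNumer, eval_bltDenom, eval_prod, eval_finsetSum]

open Filter Topology

section BltNumerZeros

variable {d : ℕ} {α lam : Fin d → ℝ}

lemma neg_one_pow_mul_eval_bltNumer_inv_pos (hlam : ∀ i, 0 < lam i) (hord : StrictAnti lam)
    (hα : ∀ i, 0 < α i) (i : Fin d) :
    0 < (-1) ^ (i : ℕ) * (bltNumer d α lam).eval (lam i)⁻¹ := by
  have hfac (j : Fin d) : 1 - lam j * (lam i)⁻¹ = 0 ↔ j = i := by
    rw [sub_eq_zero, eq_comm, mul_inv_eq_one₀ (hlam i).ne', hord.injective.eq_iff]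
  have heval : (bltNumer d α lam).eval (lam i)⁻¹
      = (lam i)⁻¹ * α i * ∏ j ∈ univ.erase i, (1 - lam j * (lam i)⁻¹) := by
    rw [eval_bltNumer, Finset.prod_eq_zero (mem_univ i) ((hfac i).mpr rfl), zero_add, mul_assoc,
      Finset.sum_eq_single i (fun k _ hk => ?_) (by simp)]
    rw [Finset.prod_eq_zero (mem_erase.mpr ⟨Ne.symm hk, mem_univ i⟩) ((hfac i).mpr rfl), mul_zero]
  have hneg : (univ.erase i).filter (fun j => 1 - lam j * (lam i)⁻¹ < 0) = Iio i := by
    ext j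
    rw [mem_filter, mem_erase, mem_Iio, sub_neg, ← div_eq_mul_inv, one_lt_div (hlam i),
      hord.lt_iff_gt]
    exact ⟨fun h => h.2, fun h => ⟨⟨h.ne, mem_univ j⟩, h⟩⟩
  have hsign := neg_one_pow_card_filter_neg_mul_prod_pos (univ.erase i)
    (fun j hj => (hfac j).not.mpr (ne_of_mem_erase hj))
  rw [hneg, Fin.card_Iio] at hsign
  rw [heval, mul_left_comm]
  exact mul_pos (mul_pos (inv_pos.mpr (hlam i)) (hα i)) hsign

lemma eval_bltNumer_inv {y : ℝ} (hy : 0 < y) (hylam : ∀ i, y < lam i) :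
    (bltNumer d α lam).eval y⁻¹
      = (∏ i, (1 - lam i * y⁻¹)) * (1 - ∑ i, α i / (lam i - y)) := by
  have hterm (i : Fin d) : y⁻¹ * (α i * ∏ j ∈ univ.erase i, (1 - lam j * y⁻¹))
      = -(α i / (lam i - y)) * ∏ j, (1 - lam j * y⁻¹) := by
    rw [← Finset.mul_prod_erase univ _ (mem_univ i)]
    have : lam i - y ≠ 0 := (sub_pos.mpr (hylam i)).ne'
    field_simp
    ring
  rw [eval_bltNumer, Finset.mul_sum, Finset.sum_congr rfl fun i _ => hterm i, ← Finset.sum_mul,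
    Finset.sum_neg_distrib]
  ring

lemma exists_neg_one_pow_mul_eval_bltNumer_pos (hlam : ∀ i, 0 < lam i)
    (hsum : ∑ i, α i / lam i < 1) :
    ∃ x, (∀ i, (lam i)⁻¹ < x) ∧ 0 < (-1) ^ d * (bltNumer d α lam).eval x := by
  have hcont : ContinuousAt (fun y => ∑ i, α i / (lam i - y)) 0 := by
    fun_prop (disch := simp [(hlam _).ne'])
  have hsmall : ∀ᶠ y in 𝓝[>] (0 : ℝ),
      0 < y ∧ (∀ i, y < lam i) ∧ ∑ i, α i / (lam i - y) < 1 :=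
    (eventually_mem_nhdsWithin (a := 0) (s := Set.Ioi 0)).and <| nhdsWithin_le_nhds <|
      (eventually_all.mpr fun i => eventually_lt_nhds (hlam i)).and
        (hcont.eventually (gt_mem_nhds (by simpa using hsum)))
  obtain ⟨y, hy, hylam, hysum⟩ := hsmall.exists
  refine ⟨y⁻¹, fun i => (inv_lt_inv₀ (hlam i) hy).mpr (hylam i), ?_⟩
  have hP : 0 < (-1) ^ d * ∏ i, (1 - lam i * y⁻¹) := by
    have hneg := Finset.prod_neg (s := univ) fun i => 1 - lam i * y⁻¹
    rw [card_univ, Fintype.card_fin] at hneg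
    rw [← hneg]
    refine Finset.prod_pos fun i _ => ?_
    rw [neg_pos, sub_neg, ← div_eq_mul_inv, one_lt_div hy]
    exact hylam i
  rw [eval_bltNumer_inv hy hylam, ← mul_assoc]
  exact mul_pos hP (sub_pos.mpr hysum)

lemma exists_interlacing_zeros_bltNumer (hlam : ∀ i, 0 < lam i) (hord : StrictAnti lam)
    (hα : ∀ i, 0 < α i) (hsum : ∑ i, α i / lam i < 1) :
    ∃ ν : Fin d → ℝ, StrictMono ν ∧ (∀ i, (lam i)⁻¹ < ν i) ∧
      (∀ i j : Fin d, (j : ℕ) = (i : ℕ) + 1 → ν i < (lam j)⁻¹) ∧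
      ∀ i, (bltNumer d α lam).eval (ν i) = 0 ∧ (bltDenom d lam).eval (ν i) ≠ 0 := by
  obtain ⟨x₀, hx₀, hsign₀⟩ := exists_neg_one_pow_mul_eval_bltNumer_pos hlam hsum
  set x : Fin (d + 1) → ℝ := Fin.snoc (α := fun _ => ℝ) (fun i => (lam i)⁻¹) x₀
  have hμ : StrictMono fun i => (lam i)⁻¹ := fun i j hij =>
    (inv_lt_inv₀ (hlam i) (hlam j)).mpr (hord hij)
  have hx : StrictMono x := Fin.strictMono_snoc hμ hx₀
  have hsign (k : Fin (d + 1)) : 0 < (-1) ^ (k : ℕ) * (bltNumer d α lam).eval (x k) := by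
    induction k using Fin.lastCases with
    | last => simpa [x] using hsign₀
    | cast i => simpa [x] using neg_one_pow_mul_eval_bltNumer_inv_pos hlam hord hα i
  obtain ⟨ν, hν⟩ := exists_zeros_of_alternating_sign (bltNumer d α lam).continuous hx hsign
  refine ⟨ν, strictMono_of_mem_Ioo_castSucc_succ hx.monotone fun i => (hν i).1,
    fun i => by simpa [x] using (hν i).1.1, fun i j hij => ?_, fun i => ⟨(hν i).2, ?_⟩⟩
  · have hsucc : i.succ = j.castSucc := Fin.ext (by simp [hij])
    simpa [x, hsucc] using (hν i).1.2
  · rw [eval_bltDenom, Finset.prod_ne_zero_iff]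
    intro j _ hj
    refine notMem_range_of_mem_Ioo_castSucc_succ hx (hν i).1 ⟨j.castSucc, ?_⟩
    simpa [x] using (eq_inv_of_mul_eq_one_right (sub_eq_zero.mp hj).symm).symm

end BltNumerZeros

lemma mem_range_inv_of_eval_bltNumer_eq_zero {d : ℕ} {α lam αh lamh : Fin d → ℝ}
    (hinv : PowerSeries.mk (bltCoef d α lam) * PowerSeries.mk (bltCoef d αh lamh) = 1) {ν : ℝ}
    (hr : (bltNumer d α lam).eval ν = 0) (hP : (bltDenom d lam).eval ν ≠ 0) :
    ν⁻¹ ∈ Set.range lamh := by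
  have h := congrArg (eval ν) (bltDenom_mul_bltDenom_eq_bltNumer_mul_bltNumer hinv)
  rw [eval_mul, eval_mul, hr, zero_mul, mul_eq_zero, or_iff_right hP, eval_bltDenom,
    prod_eq_zero_iff] at h
  obtain ⟨k, -, hk⟩ := h
  exact ⟨k, eq_inv_of_mul_eq_one_left (sub_eq_zero.mp hk).symm⟩

theorem blt_inverse_interlacing_general (d : ℕ) (α lam αh lamh : Fin d → ℝ)
    (hlam : ∀ i, lam i ∈ Set.Ioo (0 : ℝ) 1)
    (hord : StrictAnti lam)  -- λ sorted decreasingly (hence distinct)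
    (halpha : ∀ i, 0 < α i)
    (hsum2 : ∑ i, α i / lam i < 1)
    (hordh : StrictAnti lamh)  -- λ̂ sorted decreasingly
    (hinv : ∀ n : ℕ, 0 < n →
      (ltToeplitz n (bltCoef d α lam))⁻¹ = ltToeplitz n (bltCoef d αh lamh)) :
    (∀ i, lamh i < lam i) ∧
    (∀ i j : Fin d, (j : ℕ) = (i : ℕ) + 1 → lam j < lamh i) := by
  have hlam0 i : 0 < lam i := (hlam i).1
  obtain ⟨ν, hνmono, hν_gt, hν_lt, hνzero⟩ :=
    exists_interlacing_zeros_bltNumer hlam0 hord halpha hsum2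
  have hνpos i : 0 < ν i := (inv_pos.mpr (hlam0 i)).trans (hν_gt i)
  have hFG := mk_mul_mk_eq_one_of_ltToeplitz_inv (by simp [bltCoef]) hinv
  have hνinv : StrictAnti fun i => (ν i)⁻¹ := fun i j hij =>
    (inv_lt_inv₀ (hνpos j) (hνpos i)).mpr (hνmono hij)
  have hlamh : (fun i => (ν i)⁻¹) = lamh := hνinv.eq_of_forall_mem_range hordh fun i =>
    mem_range_inv_of_eval_bltNumer_eq_zero hFG (hνzero i).1 (hνzero i).2
  subst hlamh
  exact ⟨fun i => inv_lt_of_inv_lt₀ (hlam0 i) (hν_gt i),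
    fun i j hij => lt_inv_of_lt_inv₀ (hνpos i) (hν_lt i j hij)⟩

/-- If `λ` (sorted decreasingly) and `λ̂` (sorted decreasingly) are the decay
parameters of a BLT and its inverse, then they strictly interlace:
`λ₁ > λ̂₁ > λ₂ > λ̂₂ > ⋯ > λ_d > λ̂_d`. -/
theorem blt_inverse_interlacing (d : ℕ) (α lam αh lamh : Fin d → ℝ)
    (hlam : ∀ i, lam i ∈ Set.Ioo (0 : ℝ) 1)
    (hord : StrictAnti lam)  -- λ sorted decreasingly (hence distinct)
    (halpha : ∀ i, 0 < α i)
    (hsum1 : ∑ i, α i < 1)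
    (hsum2 : ∑ i, α i / lam i < 1)
    (hordh : StrictAnti lamh)  -- λ̂ sorted decreasingly
    (hinv : ∀ n : ℕ, 0 < n →
      (ltToeplitz n (bltCoef d α lam))⁻¹ = ltToeplitz n (bltCoef d αh lamh)) :
    (∀ i, lamh i < lam i) ∧
    (∀ i j : Fin d, (j : ℕ) = (i : ℕ) + 1 → lam j < lamh i) :=
  blt_inverse_interlacing_general d α lam αh lamh hlam hord halpha hsum2 hordh hinv
end

section
/- Let λ ∈ (0,1)^d be distinct and α ∈ ℝ_{>0}^d with Σ_{i=1}^d α_i/λ_i = 1. Then the polynomial r(x) = Π_{i=1}^d(1 − λ_i x) + x·Σ_{i=1}^d α_i Π_{j≠i}(1 − λ_j x) has degree exactly d − 1, and all its d − 1 roots are real, distinct, and greater than 1. -/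
open Finset Polynomial

/-!
Put `μᵢ = 1/λᵢ > 1`. At `x = μₖ` every term of `r` but one vanishes, leaving
`r(μₖ) = μₖ αₖ ∏_{j≠k} (1 - λⱼ/λₖ)`, whose sign is `(-1)^#{j | μⱼ < μₖ}`. Listing the `μᵢ` in
increasing order, `r` therefore changes sign between consecutive ones and has a root in each of
the `d - 1` gaps. The coefficient of `xᵈ` is `(-1)ᵈ (∏ λᵢ)(1 - ∑ αᵢ/λᵢ) = 0`, so `deg r ≤ d - 1`
and these roots are all of them.
-/

theorem exists_mem_Ioo_eq_zero_of_mul_neg {f : ℝ → ℝ} (hf : Continuous f) {a b : ℝ} (hab : a ≤ b)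
    (hsign : f a * f b < 0) : ∃ c ∈ Set.Ioo a b, f c = 0 := by
  rcases mul_neg_iff.mp hsign with ⟨ha, hb⟩ | ⟨ha, hb⟩
  · exact intermediate_value_Ioo' hab hf.continuousOn ⟨hb, ha⟩
  · exact intermediate_value_Ioo hab hf.continuousOn ⟨ha, hb⟩

theorem exists_strictMono_zeros_of_alternating_sign {n : ℕ} {f : ℝ → ℝ} (hf : Continuous f)
    {x : Fin (n + 1) → ℝ} (hx : StrictMono x)
    (hsign : ∀ i : Fin (n + 1), 0 < (-1) ^ (i : ℕ) * f (x i)) :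
    ∃ ρ : Fin n → ℝ, StrictMono ρ ∧
      ∀ i, ρ i ∈ Set.Ioo (x i.castSucc) (x i.succ) ∧ f (ρ i) = 0 := by
  have hzero : ∀ i : Fin n, ∃ c ∈ Set.Ioo (x i.castSucc) (x i.succ), f c = 0 := by
    intro i
    refine exists_mem_Ioo_eq_zero_of_mul_neg hf (hx i.castSucc_lt_succ).le ?_
    have hpos := mul_pos (hsign i.castSucc) (hsign i.succ)
    have hsq : ((-1 : ℝ) ^ (i : ℕ)) ^ 2 = 1 := by
      rw [← pow_mul, mul_comm, pow_mul, neg_one_sq, one_pow]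
    simp only [Fin.val_castSucc, Fin.val_succ, pow_succ] at hpos
    nlinarith
  choose ρ hρ using hzero
  refine ⟨ρ, fun i j hij => ?_, fun i => ⟨(hρ i).1, (hρ i).2⟩⟩
  calc ρ i < x i.succ := (hρ i).1.2
    _ ≤ x j.castSucc := hx.monotone (Fin.succ_le_castSucc_iff.mpr hij)
    _ < ρ j := (hρ j).1.1

theorem Polynomial.natDegree_eq_and_roots_eq_of_injective {R : Type*} [CommRing R] [IsDomain R]
    {p : R[X]} {n : ℕ} (hp : p ≠ 0) (hdeg : p.natDegree ≤ n) {ρ : Fin n → R}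
    (hρ : Function.Injective ρ) (hroot : ∀ i, p.IsRoot (ρ i)) :
    p.natDegree = n ∧ p.roots = univ.val.map ρ := by
  have hcard : Multiset.card (univ.val.map ρ) = n := by simp
  have hle : univ.val.map ρ ≤ p.roots := by
    refine (Multiset.le_iff_subset (univ.nodup.map hρ)).mpr fun x hx => ?_
    obtain ⟨i, -, rfl⟩ := Multiset.mem_map.mp hx
    exact (mem_roots hp).mpr (hroot i)
  have hcard_le : n ≤ Multiset.card p.roots := hcard ▸ Multiset.card_le_card hle
  refine ⟨le_antisymm hdeg (hcard_le.trans p.card_roots'), ?_⟩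
  exact (Multiset.eq_of_le_of_card_le hle (by simpa [hcard] using p.card_roots'.trans hdeg)).symm

theorem Tuple.card_filter_lt_apply_sort {n : ℕ} {α : Type*} [LinearOrder α] {f : Fin n → α}
    (hf : Function.Injective f) (i : Fin n) : #{j | f j < f (Tuple.sort f i)} = i := by
  set σ := Tuple.sort f
  have hmono : StrictMono (f ∘ σ) :=
    (Tuple.monotone_sort f).strictMono_of_injective (hf.comp σ.injective)
  have : ({j | f j < f (σ i)} : Finset (Fin n)) = (Iio i).map σ.toEmbedding := by
    ext j
    obtain ⟨m, rfl⟩ := σ.surjective j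
    simpa using hmono.lt_iff_lt
  rw [this, card_map, Fin.card_Iio]

section OneSubCMulX

variable {R ι : Type*} [CommRing R]

theorem natDegree_one_sub_C_mul_X_le (a : R) : (1 - C a * X).natDegree ≤ 1 := by
  compute_degree

theorem natDegree_prod_one_sub_C_mul_X_le (s : Finset ι) (lam : ι → R) :
    (∏ j ∈ s, (1 - C (lam j) * X)).natDegree ≤ #s :=
  (natDegree_prod_le _ _).trans <| by
    simpa using sum_le_sum fun j (_ : j ∈ s) => natDegree_one_sub_C_mul_X_le (lam j)

theorem coeff_prod_one_sub_C_mul_X_card (s : Finset ι) (lam : ι → R) :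
    (∏ j ∈ s, (1 - C (lam j) * X)).coeff #s = ∏ j ∈ s, -lam j := by
  simpa [coeff_one] using coeff_prod_of_natDegree_le s (fun j => 1 - C (lam j) * X) 1
    fun j _ => natDegree_one_sub_C_mul_X_le (lam j)

end OneSubCMulX

section rPoly

variable {K ι : Type*} [Field K] [Fintype ι] [DecidableEq ι]

noncomputable def rPoly (α lam : ι → K) : K[X] :=
  ∏ i, (1 - C (lam i) * X) + X * ∑ i, C (α i) * ∏ j ∈ univ.erase i, (1 - C (lam j) * X)

theorem natDegree_rPoly_le (α lam : ι → K) : (rPoly α lam).natDegree ≤ Fintype.card ι := by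
  refine natDegree_add_le_of_degree_le (natDegree_prod_one_sub_C_mul_X_le _ _) ?_
  rw [mul_sum]
  refine natDegree_sum_le_of_forall_le _ _ fun i _ => natDegree_mul_le.trans ?_
  calc X.natDegree + (C (α i) * ∏ j ∈ univ.erase i, (1 - C (lam j) * X)).natDegree
      ≤ 1 + #(univ.erase i) :=
        add_le_add natDegree_X_le ((natDegree_C_mul_le _ _).trans
          (natDegree_prod_one_sub_C_mul_X_le _ _))
    _ = Fintype.card ι := by rw [add_comm, card_erase_add_one (mem_univ i), card_univ]

theorem coeff_rPoly_card (α lam : ι → K) (hlam : ∀ i, lam i ≠ 0) :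
    (rPoly α lam).coeff (Fintype.card ι) =
      (-1) ^ Fintype.card ι * (∏ i, lam i) * (1 - ∑ i, α i / lam i) := by
  cases isEmpty_or_nonempty ι
  · simp [rPoly]
  obtain ⟨n, hn⟩ := Nat.exists_eq_succ_of_ne_zero (Fintype.card_pos (α := ι)).ne'
  have hcard (i : ι) : #(univ.erase i) = n := by simp [card_erase_of_mem, hn]
  have hterm (i : ι) :
      α i * ∏ j ∈ univ.erase i, -lam j = (-1) ^ n * (α i / lam i * ∏ j, lam j) := by
    rw [prod_neg, hcard, ← mul_prod_erase univ lam (mem_univ i)]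
    field_simp [hlam i]
  have herase (i : ι) :
      (∏ j ∈ univ.erase i, (1 - C (lam j) * X)).coeff n = ∏ j ∈ univ.erase i, -lam j :=
    hcard i ▸ coeff_prod_one_sub_C_mul_X_card _ lam
  have hprod := coeff_prod_one_sub_C_mul_X_card univ lam
  rw [card_univ, hn] at hprod
  rw [rPoly, coeff_add, hn, hprod, coeff_X_mul, finsetSum_coeff]
  simp only [coeff_C_mul, herase, hterm]
  rw [prod_neg, ← mul_sum, ← sum_mul, card_univ, hn, pow_succ]
  ring

theorem eval_rPoly_inv (α lam : ι → K) {k : ι} (hk : lam k ≠ 0) :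
    (rPoly α lam).eval (lam k)⁻¹ = (lam k)⁻¹ * α k * ∏ j ∈ univ.erase k, (1 - lam j / lam k) := by
  have hzero : (1 : K) - lam k * (lam k)⁻¹ = 0 := by rw [mul_inv_cancel₀ hk, sub_self]
  simp only [rPoly, eval_add, eval_prod, eval_mul, eval_finsetSum, eval_sub, eval_one, eval_C,
    eval_X, div_eq_mul_inv]
  rw [prod_eq_zero (mem_univ k) hzero, zero_add, sum_eq_single k (fun i _ hik => ?_) (by simp),
    mul_assoc]
  rw [prod_eq_zero (mem_erase.mpr ⟨Ne.symm hik, mem_univ k⟩) hzero, mul_zero]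

theorem sign_eval_rPoly_inv [LinearOrder K] [IsStrictOrderedRing K] {α lam : ι → K}
    (hlam : ∀ i, 0 < lam i) (hinj : Function.Injective lam) (k : ι) (hα : 0 < α k) :
    0 < (-1) ^ #{j | (lam j)⁻¹ < (lam k)⁻¹} * (rPoly α lam).eval (lam k)⁻¹ := by
  set A : Finset ι := {j | (lam j)⁻¹ < (lam k)⁻¹}
  set B : Finset ι := {j ∈ univ.erase k | ¬(lam j)⁻¹ < (lam k)⁻¹}
  have hsplit : ∏ j ∈ univ.erase k, (1 - lam j / lam k) =
      (∏ j ∈ A, (1 - lam j / lam k)) * ∏ j ∈ B, (1 - lam j / lam k) := by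
    rw [← prod_filter_mul_prod_filter_not (univ.erase k) fun j => (lam j)⁻¹ < (lam k)⁻¹,
      filter_erase, erase_eq_of_notMem (by simp)]
  have hA : 0 < (-1) ^ #A * ∏ j ∈ A, (1 - lam j / lam k) := by
    rw [← prod_neg]
    refine prod_pos fun j hj => ?_
    have hkj : lam k < lam j := (inv_lt_inv₀ (hlam j) (hlam k)).mp (mem_filter.mp hj).2
    linarith [(one_lt_div (hlam k)).mpr hkj]
  have hB : 0 < ∏ j ∈ B, (1 - lam j / lam k) := by
    refine prod_pos fun j hj => ?_
    obtain ⟨hne, hle⟩ := mem_filter.mp hj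
    have hjk : lam j < lam k :=
      (le_of_not_gt ((inv_lt_inv₀ (hlam j) (hlam k)).not.mp hle)).lt_of_ne
        (hinj.ne (ne_of_mem_erase hne))
    linarith [(div_lt_one (hlam k)).mpr hjk]
  rw [eval_rPoly_inv α lam (hlam k).ne', hsplit]
  calc 0 < (lam k)⁻¹ * α k * ((-1) ^ #A * ∏ j ∈ A, (1 - lam j / lam k)) *
        ∏ j ∈ B, (1 - lam j / lam k) :=
      mul_pos (mul_pos (mul_pos (inv_pos.mpr (hlam k)) hα) hA) hB
    _ = _ := by ring

end rPoly

/-- In the degenerate case `∑ᵢ αᵢ/λᵢ = 1`, the polynomial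
`r(x) = ∏ᵢ(1 − λᵢx) + x·∑ᵢ αᵢ ∏_{j≠i}(1 − λⱼx)` has degree exactly `d − 1`,
and all its `d − 1` roots are real, distinct, and greater than `1`. -/
theorem r_degenerate_case (d : ℕ) (α lam : Fin d → ℝ)
    (hlam : ∀ i, lam i ∈ Set.Ioo (0 : ℝ) 1)
    (hdist : Function.Injective lam)
    (halpha : ∀ i, 0 < α i)
    (hsum : ∑ i, α i / lam i = 1)
    (r : Polynomial ℝ)
    (hr : r = ∏ i, (1 - C (lam i) * X) +
      X * ∑ i, C (α i) * ∏ j ∈ Finset.univ.erase i, (1 - C (lam j) * X)) :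
    r.natDegree = d - 1 ∧
    (r.roots).card = d - 1 ∧
    (r.roots).Nodup ∧
    ∀ x ∈ r.roots, 1 < x := by
  obtain ⟨e, rfl⟩ : ∃ e, d = e + 1 := Nat.exists_eq_succ_of_ne_zero (by rintro rfl; simp at hsum)
  rw [show r = rPoly α lam from hr]
  have hlam0 : ∀ i, 0 < lam i := fun i => (hlam i).1
  have hμ : Function.Injective fun i => (lam i)⁻¹ := inv_injective.comp hdist
  set σ := Tuple.sort fun i => (lam i)⁻¹
  have hμσ : StrictMono fun i => (lam (σ i))⁻¹ :=
    (Tuple.monotone_sort _).strictMono_of_injective (hμ.comp σ.injective)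
  have hsign (i : Fin (e + 1)) : 0 < (-1) ^ (i : ℕ) * (rPoly α lam).eval (lam (σ i))⁻¹ := by
    have hpos := sign_eval_rPoly_inv hlam0 hdist (σ i) (halpha _)
    rwa [Tuple.card_filter_lt_apply_sort hμ i] at hpos
  obtain ⟨ρ, hρ, hρmem⟩ :=
    exists_strictMono_zeros_of_alternating_sign (rPoly α lam).continuous hμσ hsign
  have hne : rPoly α lam ≠ 0 := fun h => by simpa [h] using hsign 0
  have hdeg : (rPoly α lam).natDegree ≤ e := by
    have hcoeff := coeff_rPoly_card α lam fun i => (hlam0 i).ne'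
    rw [hsum, sub_self, mul_zero, Fintype.card_fin] at hcoeff
    simpa using natDegree_le_pred (by simpa using natDegree_rPoly_le α lam) hcoeff
  obtain ⟨hnat, hroots⟩ := natDegree_eq_and_roots_eq_of_injective hne hdeg hρ.injective
    fun i => (hρmem i).2
  refine ⟨by simpa using hnat, by simp [hroots], hroots ▸ univ.nodup.map hρ.injective,
    fun x hx => ?_⟩
  obtain ⟨i, -, rfl⟩ := Multiset.mem_map.mp (hroots ▸ hx)
  exact ((one_lt_inv₀ (hlam0 _)).mpr (hlam _).2).trans (hρmem i).1.1
end
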